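/- For any tangential vector field ξ on S² (viewed as an ℝ³-valued map with ξ(x)·x ≡ 0), letting ⋆ξ(x) = x × ξ(x) denote rotation by 90° in each tangent plane, the tangential parts of the Laplacians satisfy (Δ(⋆ξ))^T = ⋆((Δξ)^T). Consequently if (Δξ)^T = μξ then (Δ(⋆ξ))^T = μ(⋆ξ). -/

import Mathlib

open MeasureTheory
open scoped RealInnerProductSpace

noncomputable section

abbrev E3 := EuclideanSpace ℝ (Fin 3)

def ext {F : Type*} [NormedAddCommGroup F] [NormedSpace ℝ F] (u : E3 → F) : E3 → F :=
  fun y => u (‖y‖⁻¹ • y)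

/-- The Laplace–Beltrami operator on `S²` acting componentwise. -/
def sphLap {F : Type*} [NormedAddCommGroup F] [NormedSpace ℝ F] (u : E3 → F) (x : E3) : F :=
  ∑ i : Fin 3, iteratedFDeriv ℝ 2 (ext u) x ![EuclideanSpace.single i 1, EuclideanSpace.single i 1]

/-- The cross product in `ℝ³`. -/
def cross (a b : E3) : E3 :=
  (WithLp.equiv 2 (Fin 3 → ℝ)).symm
    ![a 1 * b 2 - a 2 * b 1, a 2 * b 0 - a 0 * b 2, a 0 * b 1 - a 1 * b 0]

/-- The tangential projection at `x ∈ S²`. -/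
def tang (x v : E3) : E3 := v - ⟪v, x⟫ • x

end

noncomputable section Aux

lemma crossA (a b : E3) : ∀ i, cross a b i =
    ![a 1 * b 2 - a 2 * b 1, a 2 * b 0 - a 0 * b 2, a 0 * b 1 - a 1 * b 0] i := by
  intro i; rfl

lemma inner3 (a b : E3) : ⟪a, b⟫ = a 0 * b 0 + a 1 * b 1 + a 2 * b 2 := by
  simp [PiLp.inner_apply, Fin.sum_univ_three, RCLike.inner_apply]; ring

/-- bundling a bilinear map on `E3` as a continuous linear map. -/
def clm2 {F : Type*} [NormedAddCommGroup F] [NormedSpace ℝ F]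
    (f : E3 →ₗ[ℝ] E3 →ₗ[ℝ] F) : E3 →L[ℝ] E3 →L[ℝ] F :=
  LinearMap.toContinuousLinearMap
    { toFun := fun a => LinearMap.toContinuousLinearMap (f a)
      map_add' := fun a b => by ext v; simp
      map_smul' := fun c a => by ext v; simp }

@[simp] lemma clm2_apply {F : Type*} [NormedAddCommGroup F] [NormedSpace ℝ F]
    (f : E3 →ₗ[ℝ] E3 →ₗ[ℝ] F) (a b : E3) : clm2 f a b = f a b := rfl

def innerL : E3 →L[ℝ] E3 →L[ℝ] ℝ :=
  clm2 (LinearMap.mk₂ ℝ (fun a b => ⟪a, b⟫)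
    (fun a b c => inner_add_left a b c)
    (fun c a b => real_inner_smul_left a b c)
    (fun a b c => inner_add_right a b c)
    (fun c a b => real_inner_smul_right a b c))

@[simp] lemma innerL_apply (a b : E3) : innerL a b = ⟪a, b⟫ := rfl

def crossL : E3 →L[ℝ] E3 →L[ℝ] E3 :=
  clm2 (LinearMap.mk₂ ℝ cross
    (fun a b c => by ext i; fin_cases i <;> simp [crossA] <;> ring)
    (fun c a b => by ext i; fin_cases i <;> simp [crossA] <;> ring)
    (fun a b c => by ext i; fin_cases i <;> simp [crossA] <;> ring)
    (fun c a b => by ext i; fin_cases i <;> simp [crossA] <;> ring))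

@[simp] lemma crossL_apply (a b : E3) : crossL a b = cross a b := rfl

lemma crossSelf (a : E3) : cross a a = 0 := by
  ext i; fin_cases i <;> simp [crossA] <;> ring

lemma inner_cross_left (a b : E3) : ⟪cross a b, a⟫ = 0 := by
  simp [crossA, inner3, Fin.sum_univ_three]; ring

lemma cross_cross_left (a b c : E3) : cross (cross a b) c = ⟪a,c⟫ • b - ⟪b,c⟫ • a := by
  ext i
  fin_cases i <;>
    simp [crossA, inner3, Fin.sum_univ_three, PiLp.sub_apply, PiLp.smul_apply, smul_eq_mul] <;>
    ring

lemma cross_cross_right (a b c : E3) : cross a (cross b c) = ⟪a,c⟫ • b - ⟪a,b⟫ • c := by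
  ext i
  fin_cases i <;>
    simp [crossA, inner3, Fin.sum_univ_three, PiLp.sub_apply, PiLp.smul_apply, smul_eq_mul] <;>
    ring

def Nf : E3 → E3 := fun y => ‖y‖⁻¹ • y
def rhof : E3 → ℝ := fun y => ‖y‖⁻¹
def Kmap (y : E3) : E3 →L[ℝ] E3 := (innerL y).smulRight y
def Mder (y : E3) : E3 →L[ℝ] E3 :=
  rhof y • ContinuousLinearMap.id ℝ E3 - (rhof y)^3 • Kmap y

lemma Mder_apply (y v : E3) : Mder y v = ‖y‖⁻¹ • v - ((‖y‖^3)⁻¹ * ⟪y,v⟫) • y := by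
  simp [Mder, rhof, Kmap, ContinuousLinearMap.smul_apply, ContinuousLinearMap.smulRight_apply,
    sub_smul, smul_smul, inv_pow]

lemma sqrt_sum (y : E3) : Real.sqrt (∑ i, y i * y i) = ‖y‖ := by
  rw [EuclideanSpace.norm_eq]
  congr 1
  refine Finset.sum_congr rfl fun i _ => ?_
  rw [Real.norm_eq_abs, sq_abs, sq]

lemma sqrt_inner_self (y : E3) : Real.sqrt ⟪y,y⟫ = ‖y‖ := by
  rw [real_inner_self_eq_norm_mul_norm]; exact Real.sqrt_mul_self (norm_nonneg _)

lemma hasFDerivAt_rho {y : E3} (hy : y ≠ 0) :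
    HasFDerivAt rhof (-((‖y‖^3)⁻¹) • (innerL y)) y := by
  have hq0 : ⟪y,y⟫ ≠ (0:ℝ) := inner_self_ne_zero.mpr hy
  have hq : HasFDerivAt (fun z : E3 => ⟪z,z⟫)
      ((fderivInnerCLM ℝ (y,y)).comp ((ContinuousLinearMap.id ℝ E3).prod
        (ContinuousLinearMap.id ℝ E3))) y :=
    (hasFDerivAt_id y).inner ℝ (hasFDerivAt_id y)
  have hsqrt : HasDerivAt (fun s : ℝ => (Real.sqrt s)⁻¹)
      (-(1 / (2 * Real.sqrt ⟪y,y⟫)) / (Real.sqrt ⟪y,y⟫)^2) ⟪y,y⟫ := by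
    refine (Real.hasDerivAt_sqrt hq0).inv ?_
    rw [sqrt_inner_self]; exact norm_ne_zero_iff.mpr hy
  have hcomp := hsqrt.comp_hasFDerivAt (f := fun z : E3 => ⟪z,z⟫) y hq
  have hfun : rhof = ((fun s : ℝ => (Real.sqrt s)⁻¹) ∘ fun z : E3 => ⟪z,z⟫) := by
    funext z
    show ‖z‖⁻¹ = _
    simp [Function.comp, PiLp.inner_apply, RCLike.inner_apply, sqrt_sum]
  rw [hfun]
  refine hcomp.congr_fderiv ?_
  ext v
  have hn : ‖y‖ ≠ 0 := norm_ne_zero_iff.mpr hy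
  have hn3 : ‖y‖^3 ≠ 0 := pow_ne_zero _ hn
  simp [fderivInnerCLM_apply, real_inner_comm y v, sqrt_sum]
  field_simp
  ring

lemma hasFDerivAt_Nf {y : E3} (hy : y ≠ 0) : HasFDerivAt Nf (Mder y) y := by
  have h := (hasFDerivAt_rho hy).smul (hasFDerivAt_id y)
  refine (h : HasFDerivAt Nf _ y).congr_fderiv ?_
  ext v
  have hn : ‖y‖ ≠ 0 := norm_ne_zero_iff.mpr hy
  simp [Mder_apply, rhof, ContinuousLinearMap.smulRight_apply, inv_pow]
  module

lemma hasFDerivAt_Kmap (x : E3) :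
    HasFDerivAt Kmap
      ((( ContinuousLinearMap.smulRightL ℝ E3 E3).comp innerL x).comp
          (ContinuousLinearMap.id ℝ E3) +
        (((ContinuousLinearMap.smulRightL ℝ E3 E3).comp innerL).flip x)) x := by
  have hc : HasFDerivAt (fun y : E3 => (ContinuousLinearMap.smulRightL ℝ E3 E3).comp innerL y)
      ((ContinuousLinearMap.smulRightL ℝ E3 E3).comp innerL) x :=
    ContinuousLinearMap.hasFDerivAt _
  exact hc.clm_apply (hasFDerivAt_id x)

lemma key {u : E3 → E3} (hu : ContDiff ℝ (⊤ : ℕ∞) u) {x : E3} (hx : ‖x‖ = 1) (v : E3) :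
    iteratedFDeriv ℝ 2 (ext u) x ![v, v] =
      fderiv ℝ (fderiv ℝ u) x (v - ⟪x,v⟫ • x) (v - ⟪x,v⟫ • x)
        + fderiv ℝ u x ((3*⟪x,v⟫^2 - ⟪v,v⟫) • x - (2*⟪x,v⟫) • v) := by
  have hx0 : x ≠ 0 := by intro h; rw [h] at hx; simp at hx
  have hud : Differentiable ℝ u := hu.differentiable (by simp)
  have hu' : ContDiff ℝ (⊤ : ℕ∞) (fderiv ℝ u) := hu.fderiv_right (by simp)
  have hNx : Nf x = x := by simp [Nf, hx]
  have hfd : ∀ y : E3, y ≠ 0 → HasFDerivAt (ext u) (((fderiv ℝ u) (Nf y)).comp (Mder y)) y := by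
    intro y hy
    exact (hud (Nf y)).hasFDerivAt.comp y (hasFDerivAt_Nf hy)
  have hev : fderiv ℝ (ext u) =ᶠ[nhds x] fun y => ((fderiv ℝ u) (Nf y)).comp (Mder y) := by
    filter_upwards [eventually_ne_nhds hx0] with y hy
    exact (hfd y hy).fderiv
  have hG : HasFDerivAt (fun y => (fderiv ℝ u) (Nf y))
      ((fderiv ℝ (fderiv ℝ u) x).comp (Mder x)) x := by
    have h1 : HasFDerivAt (fderiv ℝ u) (fderiv ℝ (fderiv ℝ u) (Nf x)) (Nf x) :=
      ((hu'.differentiable (by simp)) (Nf x)).hasFDerivAt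
    have h2 := h1.comp x (hasFDerivAt_Nf hx0)
    rw [hNx] at h2
    exact h2
  have hr := hasFDerivAt_rho hx0
  have hr3 := (hr.mul hr).mul hr
  rw [show (rhof * rhof * rhof) = (fun y => (rhof y)^3) from by funext y; simp only [Pi.mul_apply]; ring]
    at hr3
  have hMd := (hr.smul_const (ContinuousLinearMap.id ℝ E3)).sub (hr3.smul (hasFDerivAt_Kmap x))
  rw [show ((fun y => rhof y • ContinuousLinearMap.id ℝ E3) - (fun y => (rhof y)^3) • Kmap) = Mder
    from rfl] at hMd
  have hW := hG.clm_comp hMd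
  have h2 : fderiv ℝ (fderiv ℝ (ext u)) x
      = fderiv ℝ (fun y => ((fderiv ℝ u) (Nf y)).comp (Mder y)) x := hev.fderiv_eq
  rw [iteratedFDeriv_two_apply, h2, hW.fderiv]
  have hrx : rhof x = 1 := by simp [rhof, hx]
  have hMxv : ∀ w : E3, Mder x w = w - ⟪x,w⟫ • x := by
    intro w; rw [Mder_apply, hx]; simp
  have hsr : ∀ (c : E3 →L[ℝ] ℝ) (f e : E3),
      ContinuousLinearMap.smulRightL ℝ E3 E3 c f e = c e • f := fun _ _ _ => rfl
  simp only [ContinuousLinearMap.add_apply, ContinuousLinearMap.coe_comp', Function.comp_apply,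
    ContinuousLinearMap.compL_apply, ContinuousLinearMap.flip_apply,
    ContinuousLinearMap.sub_apply, ContinuousLinearMap.smul_apply,
    ContinuousLinearMap.smulRight_apply, ContinuousLinearMap.coe_id', id_eq,
    Matrix.cons_val_zero, Matrix.cons_val_one, Matrix.head_cons, hNx, hrx, hx,
    innerL_apply, one_pow, one_smul, one_mul, inv_one, hsr, hMxv, Kmap, Pi.mul_apply]
  simp only [map_sub, _root_.map_smul, map_add, smul_eq_mul]
  module

/-- The spherical Laplacian of (the extension of) a globally smooth map, at a point of `S²`. -/
lemma sphLap_eq {u : E3 → E3} (hu : ContDiff ℝ (⊤ : ℕ∞) u) {x : E3} (hx : ‖x‖ = 1) :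
    sphLap u x = (∑ i : Fin 3,
        fderiv ℝ (fderiv ℝ u) x (EuclideanSpace.single i 1 - ⟪x, EuclideanSpace.single i 1⟫ • x)
          (EuclideanSpace.single i 1 - ⟪x, EuclideanSpace.single i 1⟫ • x))
      - (2:ℝ) • fderiv ℝ u x x := by
  have hxx : x 0 * x 0 + x 1 * x 1 + x 2 * x 2 = 1 := by
    rw [← inner3, real_inner_self_eq_norm_mul_norm, hx]; norm_num
  have hsum : (∑ i : Fin 3,
      ((3*⟪x, EuclideanSpace.single i 1⟫^2 - ⟪(EuclideanSpace.single i 1 : E3),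
          EuclideanSpace.single i 1⟫) • x
        - (2*⟪x, EuclideanSpace.single i 1⟫) • (EuclideanSpace.single i 1 : E3)))
      = -((2:ℝ) • x) := by
    ext j
    fin_cases j <;>
      simp [Fin.sum_univ_three, inner3, EuclideanSpace.single_apply, PiLp.sub_apply,
        PiLp.smul_apply, PiLp.add_apply, PiLp.neg_apply, smul_eq_mul]
    · linear_combination 3 * x 0 * hxx
    · linear_combination 3 * x 1 * hxx
    · linear_combination 3 * x 2 * hxx
  rw [sphLap, Finset.sum_congr rfl (fun i _ => key hu hx (EuclideanSpace.single i 1)),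
    Finset.sum_add_distrib, ← map_sum, hsum, map_neg, _root_.map_smul]
  module

/-- Differentiating the tangency constraint along the sphere. -/
lemma tangc {ξ : E3 → E3} (hξ : ContDiff ℝ (⊤ : ℕ∞) ξ)
    (htan : ∀ z ∈ Metric.sphere (0 : E3) 1, ⟪ξ z, z⟫ = 0)
    {x : E3} (hx : ‖x‖ = 1) {v : E3} (hv : ⟪x, v⟫ = 0) :
    ⟪fderiv ℝ ξ x v, x⟫ = -⟪ξ x, v⟫ := by
  have hx0 : x ≠ 0 := by intro h; rw [h] at hx; simp at hx
  have hxx : ⟪x, x⟫ = 1 := by rw [real_inner_self_eq_norm_mul_norm, hx]; norm_num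
  have hne : ∀ t : ℝ, x + t • v ≠ 0 := by
    intro t h
    have h1 : ⟪x + t • v, x⟫ = 0 := by rw [h]; simp
    have hv' : ⟪v, x⟫ = 0 := by rw [real_inner_comm]; exact hv
    rw [inner_add_left, real_inner_smul_left, hxx, hv'] at h1
    simp at h1
  have hsph : ∀ t : ℝ, Nf (x + t • v) ∈ Metric.sphere (0 : E3) 1 := by
    intro t
    rw [mem_sphere_zero_iff_norm, Nf]
    rw [norm_smul, norm_inv, norm_norm, inv_mul_cancel₀ (norm_ne_zero_iff.mpr (hne t))]
  have h00 : x + (0:ℝ) • v = x := by simp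
  have hψ : HasDerivAt (fun t : ℝ => x + t • v) v 0 := by
    simpa using ((hasDerivAt_id (0:ℝ)).smul_const v).const_add x
  have hc : HasDerivAt (fun t : ℝ => Nf (x + t • v)) (Mder x v) 0 := by
    have := (hasFDerivAt_Nf (y := x + (0:ℝ) • v) (by rw [h00]; exact hx0)).comp_hasDerivAt 0 hψ
    rwa [h00] at this
  have hN0 : Nf (x + (0:ℝ) • v) = x := by rw [h00]; simp [Nf, hx]
  have hξc : HasDerivAt (fun t : ℝ => ξ (Nf (x + t • v))) (fderiv ℝ ξ x (Mder x v)) 0 := by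
    have h1 : HasFDerivAt ξ (fderiv ℝ ξ x) (Nf (x + (0:ℝ) • v)) := by
      rw [hN0]; exact ((hξ.differentiable (by simp)) x).hasFDerivAt
    exact h1.comp_hasDerivAt 0 hc
  have hder := hξc.inner ℝ hc
  have hφ0 : (fun t : ℝ => ⟪ξ (Nf (x + t • v)), Nf (x + t • v)⟫) = fun _ => (0:ℝ) :=
    funext fun t => htan _ (hsph t)
  rw [hφ0] at hder
  have huniq := hder.unique (hasDerivAt_const 0 0)
  rw [hN0] at huniq
  have hMv : Mder x v = v := by rw [Mder_apply, hx, hv]; simp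
  rw [hMv] at huniq
  linarith [huniq, real_inner_comm (ξ x) v]

end Aux

set_option maxHeartbeats 1000000 in
/-- For a tangential vector field `ξ` on `S²`, with `⋆ξ(x) = x × ξ(x)` the rotation by 90° in
each tangent plane, one has `(Δ(⋆ξ))^T = ⋆((Δξ)^T)`; consequently if `(Δξ)^T = μξ` then
`(Δ(⋆ξ))^T = μ(⋆ξ)`. -/
theorem stmt15 (ξ : E3 → E3) (hξ : ContDiff ℝ (⊤ : ℕ∞) ξ)
    (htan : ∀ x ∈ Metric.sphere (0 : E3) 1, ⟪ξ x, x⟫ = 0) :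
    (∀ x ∈ Metric.sphere (0 : E3) 1,
      tang x (sphLap (fun y => cross y (ξ y)) x) = cross x (tang x (sphLap ξ x))) ∧
    ∀ μ : ℝ, (∀ x ∈ Metric.sphere (0 : E3) 1, tang x (sphLap ξ x) = μ • ξ x) →
      ∀ x ∈ Metric.sphere (0 : E3) 1,
        tang x (sphLap (fun y => cross y (ξ y)) x) = μ • cross x (ξ x) := by
  have main : ∀ x ∈ Metric.sphere (0 : E3) 1,
      tang x (sphLap (fun y => cross y (ξ y)) x) = cross x (tang x (sphLap ξ x)) := by
    intro x hxs
    have hx : ‖x‖ = 1 := by rwa [mem_sphere_zero_iff_norm] at hxs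
    have hxx : ⟪x, x⟫ = 1 := by rw [real_inner_self_eq_norm_mul_norm, hx]; norm_num
    have hξx : ⟪ξ x, x⟫ = 0 := htan x hxs
    have hξx2 : ξ x 0 * x 0 + ξ x 1 * x 1 + ξ x 2 * x 2 = 0 := by rw [← inner3]; exact hξx
    have hξd : Differentiable ℝ ξ := hξ.differentiable (by simp)
    set w : E3 → E3 := fun y => cross y (ξ y) with hw_def
    have hw : ContDiff ℝ (⊤ : ℕ∞) w := by
      have hb : ContDiff ℝ (⊤ : ℕ∞) (fun p : E3 × E3 => crossL p.1 p.2) :=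
        crossL.isBoundedBilinearMap.contDiff
      exact hb.comp (contDiff_id.prodMk hξ)
    set P : Fin 3 → E3 := fun i => EuclideanSpace.single i 1 - ⟪x, EuclideanSpace.single i 1⟫ • x
      with hP_def
    have hPe : ∀ i : Fin 3,
        P i = EuclideanSpace.single i 1 - ⟪x, EuclideanSpace.single i 1⟫ • x := fun i => rfl
    have hPtan : ∀ i, ⟪x, P i⟫ = 0 := by
      intro i
      rw [hPe i, inner_sub_right, real_inner_smul_right, hxx, mul_one, sub_self]
    have hPtan' : ∀ i, ⟪P i, x⟫ = 0 := fun i => by rw [real_inner_comm]; exact hPtan i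
    have hxe : ∀ (a : E3) (i : Fin 3), ⟪a, EuclideanSpace.single i 1⟫ = a i := by
      intro a i
      fin_cases i <;> simp [inner3, EuclideanSpace.single_apply]
    have hPj : ∀ i j : Fin 3, P i j = (EuclideanSpace.single i 1 : E3) j - x i * x j := by
      intro i j
      rw [hPe i]
      simp only [PiLp.sub_apply, PiLp.smul_apply, smul_eq_mul, hxe]
    -- general form of the spherical Laplacian
    have hsphq : ∀ (u : E3 → E3), ContDiff ℝ (⊤ : ℕ∞) u →
        sphLap u x = (∑ i : Fin 3, fderiv ℝ (fderiv ℝ u) x (P i) (P i))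
          - (2:ℝ) • fderiv ℝ u x x := by
      intro u hu
      rw [sphLap_eq hu hx]
    -- first derivative of w
    have hWy : ∀ y : E3, HasFDerivAt w ((crossL y).comp (fderiv ℝ ξ y) + crossL.flip (ξ y)) y := by
      intro y
      exact crossL.hasFDerivAt.clm_apply (hξd y).hasFDerivAt
    have hfw : fderiv ℝ w = fun y => (crossL y).comp (fderiv ℝ ξ y) + crossL.flip (ξ y) :=
      funext fun y => (hWy y).fderiv
    -- second derivative of w
    have hξ'at : HasFDerivAt (fderiv ℝ ξ) (fderiv ℝ (fderiv ℝ ξ) x) x :=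
      (((hξ.fderiv_right (m := (⊤ : ℕ∞)) (by simp)).differentiable (by simp)) x).hasFDerivAt
    have hW2 := (crossL.hasFDerivAt.clm_comp hξ'at).add
      ((crossL.flip.hasFDerivAt (x := ξ x)).comp x (hξd x).hasFDerivAt)
    have hfw2 : fderiv ℝ (fderiv ℝ w) x
        = (((ContinuousLinearMap.compL ℝ E3 E3 E3) (crossL x)).comp (fderiv ℝ (fderiv ℝ ξ) x) +
            ((ContinuousLinearMap.compL ℝ E3 E3 E3).flip (fderiv ℝ ξ x)).comp crossL) +
          crossL.flip.comp (fderiv ℝ ξ x) := by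
      rw [hfw]
      exact hW2.fderiv
    have hw2val : ∀ a b : E3, fderiv ℝ (fderiv ℝ w) x a b
        = crossL x (fderiv ℝ (fderiv ℝ ξ) x a b) + crossL a (fderiv ℝ ξ x b)
          + crossL b (fderiv ℝ ξ x a) := by
      intro a b
      rw [hfw2]
      simp only [ContinuousLinearMap.add_apply, ContinuousLinearMap.coe_comp',
        Function.comp_apply, ContinuousLinearMap.compL_apply, ContinuousLinearMap.flip_apply]
    have hw1val : fderiv ℝ w x x = crossL x (fderiv ℝ ξ x x) + crossL x (ξ x) := by
      rw [hfw]
      simp only [ContinuousLinearMap.add_apply, ContinuousLinearMap.coe_comp',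
        Function.comp_apply, ContinuousLinearMap.flip_apply]
    -- the first-order curl term
    set C : E3 := ∑ i : Fin 3, crossL (P i) (fderiv ℝ ξ x (P i)) with hC_def
    -- constraint from tangency
    have hTi : ∀ i, ⟪fderiv ℝ ξ x (P i), x⟫ = -⟪ξ x, EuclideanSpace.single i 1⟫ := by
      intro i
      rw [tangc hξ htan hx (hPtan i), hPe i, inner_sub_right, real_inner_smul_right, hξx,
        mul_zero, sub_zero]
    -- the key geometric identity : tang x C = cross x (ξ x)
    have hCx : cross C x = ξ x := by
      have h1 : cross C x = ∑ i : Fin 3, cross (cross (P i) (fderiv ℝ ξ x (P i))) x := by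
        rw [hC_def]
        simpa only [ContinuousLinearMap.flip_apply, crossL_apply] using
          map_sum (crossL.flip x) (fun i => crossL (P i) (fderiv ℝ ξ x (P i))) Finset.univ
      have h2 : ∀ i : Fin 3, cross (cross (P i) (fderiv ℝ ξ x (P i))) x
          = ⟪ξ x, EuclideanSpace.single i 1⟫ • P i := by
        intro i
        rw [cross_cross_left, hPtan' i, hTi i]
        module
      rw [h1, Finset.sum_congr rfl fun i _ => h2 i]
      ext j
      simp only [Fin.sum_univ_three, PiLp.add_apply, PiLp.smul_apply, smul_eq_mul, hPj, hxe]
      fin_cases j <;> simp [EuclideanSpace.single_apply]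
      · linear_combination (-(x 0)) * hξx2
      · linear_combination (-(x 1)) * hξx2
      · linear_combination (-(x 2)) * hξx2
    have hCtang : C - ⟪C, x⟫ • x = crossL x (ξ x) := by
      have h3 := cross_cross_right x C x
      rw [hCx, hxx, one_smul] at h3
      rw [real_inner_comm x C]
      exact h3.symm
    -- assembling the Laplacian of w
    have e2 : (∑ i : Fin 3, crossL x (fderiv ℝ (fderiv ℝ ξ) x (P i) (P i)))
        = crossL x (∑ i : Fin 3, fderiv ℝ (fderiv ℝ ξ) x (P i) (P i)) :=
      (map_sum (crossL x) (fun i => fderiv ℝ (fderiv ℝ ξ) x (P i) (P i)) Finset.univ).symm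
    have hsw : sphLap w x = crossL x (sphLap ξ x) + (2:ℝ) • C - (2:ℝ) • crossL x (ξ x) := by
      rw [hsphq w hw, hsphq ξ hξ, hw1val,
        Finset.sum_congr rfl (fun i _ => hw2val (P i) (P i)),
        Finset.sum_add_distrib, Finset.sum_add_distrib, ← hC_def, e2,
        map_sub (crossL x), _root_.map_smul (crossL x)]
      module
    -- final computation
    have hic : ∀ z : E3, ⟪crossL x z, x⟫ = 0 := fun z => inner_cross_left x z
    rw [hsw]
    simp only [tang, ← crossL_apply, map_sub, _root_.map_smul]
    rw [show crossL x x = 0 from crossSelf x, smul_zero, sub_zero]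
    simp only [inner_sub_left, inner_add_left, real_inner_smul_left, hic, mul_zero, zero_add,
      sub_zero, add_zero, zero_sub, neg_zero]
    linear_combination (norm := module) (2:ℝ) • hCtang
  refine ⟨main, ?_⟩
  intro μ hμ x hxs
  rw [main x hxs, hμ x hxs]
  simp only [← crossL_apply, _root_.map_smul]
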